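/- arXiv:1906.01150 — 4 statements merged into one kernel-verified Lean document; each statement's English description precedes it below -/
import Mathlib

section
/- Let m, d_F, d_O be positive integers, let a : ℝ → ℝ be differentiable with a'(z) ≠ 0 for every z ∈ ℝ, let v ∈ ℝ^m have v_j > 0 for every j, let C : ℝ^{d_F} → ℝ^{d_O} be differentiable, and let ℓ : ℝ^{d_O} → ℝ be differentiable. Define F : ℝ^{d_F × m} → ℝ^{d_F} by F(W)_i = a(Σ_j W_{ij} v_j) and Φ(W) = ℓ(C(F(W))). If the Fréchet derivative of Φ vanishes at W* (in particular if W* is a local minimizer of Φ), then the Fréchet derivative of the map f ↦ ℓ(C(f)) vanishes at f = F(W*); equivalently, Σ_k (∂C_k/∂f_i)(F(W*)) · (∂ℓ/∂y_k)(C(F(W*))) = 0 for every i = 1, …, d_F. -/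
lemma single_eq_ite (n : ℕ) (i : Fin n) :
    (Pi.single i 1 : Fin n → ℝ) = fun j => if i = j then 1 else 0 := by
  funext j; simp [Pi.single_apply, eq_comm]

/-- Lemma 1: if the full objective `Φ = ℓ ∘ C ∘ F` is stationary at `W*` (e.g. a local
minimizer), where the last layer is fully connected with entrywise activation `a`
(positive-derivative-free, just `a' ≠ 0`) acting on the componentwise-positive
previous-layer output `v`, then the map `f ↦ ℓ (C f)` is stationary at `F W*`;
equivalently the backpropagated signal `∑ k ∂C_k/∂f_i · ∂ℓ/∂y_k` vanishes for every `i`. -/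
theorem stmt0 (m dF dO : ℕ) (hm : 0 < m) (hdF : 0 < dF) (hdO : 0 < dO)
    (a : ℝ → ℝ) (ha : Differentiable ℝ a) (ha' : ∀ z : ℝ, deriv a z ≠ 0)
    (v : Fin m → ℝ) (hv : ∀ j, 0 < v j)
    (C : (Fin dF → ℝ) → (Fin dO → ℝ)) (hC : Differentiable ℝ C)
    (ℓ : (Fin dO → ℝ) → ℝ) (hℓ : Differentiable ℝ ℓ)
    (F : (Fin dF → Fin m → ℝ) → (Fin dF → ℝ))
    (hF : ∀ W i, F W i = a (∑ j, W i j * v j))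
    (Φ : (Fin dF → Fin m → ℝ) → ℝ)
    (hΦ : ∀ W, Φ W = ℓ (C (F W)))
    (Wstar : Fin dF → Fin m → ℝ)
    (hcrit : fderiv ℝ Φ Wstar = 0) :
    fderiv ℝ (fun f => ℓ (C f)) (F Wstar) = 0 ∧
      ∀ i, ∑ k, fderiv ℝ C (F Wstar) (Pi.single i 1) k *
          fderiv ℝ ℓ (C (F Wstar)) (Pi.single k 1) = 0 := by
  classical
  set g : (Fin dF → ℝ) → ℝ := fun f => ℓ (C f) with hg
  have hgdiff : Differentiable ℝ g := hℓ.comp hC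
  -- the linear map W ↦ ∑ j, W i j * v j
  set T : Fin dF → ((Fin dF → Fin m → ℝ) →L[ℝ] ℝ) := fun i =>
    ∑ j, v j • ((ContinuousLinearMap.proj j).comp
      (ContinuousLinearMap.proj (R := ℝ) (φ := fun _ : Fin dF => Fin m → ℝ) i)) with hT
  have hTapp : ∀ i W, T i W = ∑ j, W i j * v j := by
    intro i W
    simp [hT, mul_comm]
  set s : Fin dF → ℝ := fun i => ∑ j, Wstar i j * v j with hs
  -- derivative of F
  set L : (Fin dF → Fin m → ℝ) →L[ℝ] (Fin dF → ℝ) :=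
    ContinuousLinearMap.pi (fun i => deriv a (s i) • T i) with hL
  have hFderiv : HasFDerivAt F L Wstar := by
    rw [hasFDerivAt_pi']
    intro i
    have h1 : HasFDerivAt (fun W : Fin dF → Fin m → ℝ => T i W) (T i) Wstar :=
      (T i).hasFDerivAt
    have h2 : HasDerivAt a (deriv a (T i Wstar)) (T i Wstar) :=
      (ha (T i Wstar)).hasDerivAt
    have h3 := h2.comp_hasFDerivAt Wstar h1
    have heq : (fun W : Fin dF → Fin m → ℝ => F W i) =
        (fun W => a (T i W)) := by
      funext W; rw [hF, hTapp]
    rw [heq]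
    have hsi : T i Wstar = s i := by rw [hTapp]
    rw [hsi] at h3
    simpa [hL, ContinuousLinearMap.proj_pi, Function.comp_def] using h3
  have hΦderiv : HasFDerivAt Φ ((fderiv ℝ g (F Wstar)).comp L) Wstar := by
    have := ((hgdiff (F Wstar)).hasFDerivAt).comp Wstar hFderiv
    have heq : Φ = g ∘ F := by funext W; simp [hΦ, hg]
    rw [heq]; exact this
  have hcomp0 : (fderiv ℝ g (F Wstar)).comp L = 0 := by
    rw [← hΦderiv.fderiv]; exact hcrit
  -- evaluate at directions Pi.single i (Pi.single j0 1)
  set j0 : Fin m := ⟨0, hm⟩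
  have hzero : ∀ i, fderiv ℝ g (F Wstar) (Pi.single i 1) = 0 := by
    intro i
    set U : Fin dF → Fin m → ℝ := Pi.single i (Pi.single j0 1) with hU
    have hLU : L U = (deriv a (s i) * v j0) • (Pi.single i 1 : Fin dF → ℝ) := by
      funext i'
      simp only [hL, ContinuousLinearMap.pi_apply, ContinuousLinearMap.smul_apply]
      rw [hTapp]
      rcases eq_or_ne i' i with rfl | hne
      · simp [hU, Pi.single_apply, Finset.sum_ite_eq', mul_comm]
      · simp [hU, Pi.single_apply, Ne.symm hne, hne]
    have h0 : fderiv ℝ g (F Wstar) (L U) = 0 := by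
      have := congrArg (fun (M : (Fin dF → Fin m → ℝ) →L[ℝ] ℝ) => M U) hcomp0
      simpa using this
    rw [hLU] at h0
    simp only [map_smul, smul_eq_mul] at h0
    have hne : deriv a (s i) * v j0 ≠ 0 :=
      mul_ne_zero (ha' _) (ne_of_gt (hv j0))
    exact (mul_eq_zero.mp h0).resolve_left hne
  have hmain : fderiv ℝ (fun f => ℓ (C f)) (F Wstar) = 0 := by
    ext x
    have hx : x = ∑ i, x i • (Pi.single i 1 : Fin dF → ℝ) := by
      simp only [single_eq_ite]; exact pi_eq_sum_univ x
    rw [hx]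
    simp only [map_sum, map_smul, ContinuousLinearMap.zero_apply]
    simp [← hg, hzero, smul_eq_mul]
  refine ⟨hmain, ?_⟩
  intro i
  have hchain : fderiv ℝ g (F Wstar) =
      (fderiv ℝ ℓ (C (F Wstar))).comp (fderiv ℝ C (F Wstar)) :=
    fderiv_comp (F Wstar) (hℓ _) (hC _)
  have h0 : fderiv ℝ g (F Wstar) (Pi.single i 1) = 0 := hzero i
  rw [hchain] at h0
  simp only [ContinuousLinearMap.comp_apply] at h0
  set y := fderiv ℝ C (F Wstar) (Pi.single i 1) with hy
  have hyeq : y = ∑ k, y k • (Pi.single k 1 : Fin dO → ℝ) := by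
    simp only [single_eq_ite]; exact pi_eq_sum_univ y
  rw [hyeq, map_sum] at h0
  simpa [smul_eq_mul] using h0
end

section
/- Let λ > 0, f₁, f₂ ∈ ℝ^d, and t₁, t₂ ∈ ℝ, and let (θ̄*, θ⁰*) be the unique global minimizer of the two-point ridge objective J. Then θ̄* = ((t₁ − t₂) / (λ + ‖f₁ − f₂‖²)) · (f₁ − f₂). In particular, θ̄* is a scalar multiple of f₁ − f₂, and θ̄* ≠ 0 whenever t₁ ≠ t₂ and f₁ ≠ f₂. -/
open Matrix

private lemma quad_key (A B : ℝ) (h : ∀ ε : ℝ, 0 ≤ A * ε ^ 2 + B * ε) : B = 0 := by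
  by_contra hB
  have ht : (0:ℝ) < 1 / (|A| + 1) := by positivity
  set t := 1 / (|A| + 1) with htdef
  have hAt : A * t < 1 := by
    have h1 : A * t ≤ |A| * t := by
      apply mul_le_mul_of_nonneg_right (le_abs_self A) ht.le
    have h2 : |A| * t < 1 := by
      rw [htdef]
      rw [mul_one_div, div_lt_one (by positivity)]
      linarith
    linarith
  have := h (-(t * B))
  have hB2 : 0 < B ^ 2 := by positivity
  nlinarith [this, hB2, mul_pos ht hB2]

/-- Closed form for the weak-classifier weight vector: the (unique) global minimizer
`(θ̄*, θ⁰*)` of the two-point ridge objective satisfies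
`θ̄* = ((t₁ − t₂)/(λ + ‖f₁ − f₂‖²)) (f₁ − f₂)`; in particular `θ̄*` is a scalar
multiple of `f₁ − f₂`, and is nonzero when `t₁ ≠ t₂` and `f₁ ≠ f₂`. -/
theorem stmt5 (d : ℕ) (lam : ℝ) (hlam : 0 < lam)
    (f₁ f₂ : Fin d → ℝ) (t₁ t₂ : ℝ)
    (θs : Fin d → ℝ) (θ0s : ℝ)
    (hmin : ∀ q : (Fin d → ℝ) × ℝ,
      (θs ⬝ᵥ f₁ + θ0s - t₁) ^ 2 + (θs ⬝ᵥ f₂ + θ0s - t₂) ^ 2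
          + (lam / 2) * (θs ⬝ᵥ θs) ≤
        (q.1 ⬝ᵥ f₁ + q.2 - t₁) ^ 2 + (q.1 ⬝ᵥ f₂ + q.2 - t₂) ^ 2
          + (lam / 2) * (q.1 ⬝ᵥ q.1)) :
    θs = ((t₁ - t₂) / (lam + (f₁ - f₂) ⬝ᵥ (f₁ - f₂))) • (f₁ - f₂) ∧
    (∃ c : ℝ, θs = c • (f₁ - f₂)) ∧
    (t₁ ≠ t₂ → f₁ ≠ f₂ → θs ≠ 0) := by
  set r₁ := θs ⬝ᵥ f₁ + θ0s - t₁ with hr₁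
  set r₂ := θs ⬝ᵥ f₂ + θ0s - t₂ with hr₂
  have hB : ∀ (v : Fin d → ℝ) (b : ℝ),
      2*r₁*(v ⬝ᵥ f₁ + b) + 2*r₂*(v ⬝ᵥ f₂ + b) + lam*(θs ⬝ᵥ v) = 0 := by
    intro v b
    apply quad_key ((v ⬝ᵥ f₁ + b)^2 + (v ⬝ᵥ f₂ + b)^2 + (lam/2)*(v ⬝ᵥ v))
    intro ε
    have h := hmin (θs + ε • v, θ0s + ε * b)
    simp only [add_dotProduct, smul_dotProduct, dotProduct_add, dotProduct_smul,
      smul_eq_mul] at h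
    rw [dotProduct_comm v θs] at h
    simp only [hr₁, hr₂]
    nlinarith [h]
  have h0 : r₁ + r₂ = 0 := by
    have := hB 0 1
    simp only [zero_dotProduct, dotProduct_zero, zero_add, mul_zero, add_zero, mul_one] at this
    linarith
  have hv : ∀ v : Fin d → ℝ, 2*r₁*(v ⬝ᵥ (f₁ - f₂)) + lam*(θs ⬝ᵥ v) = 0 := by
    intro v
    have := hB v 0
    simp only [add_zero] at this
    rw [dotProduct_sub]
    have hr : r₂ = -r₁ := by linarith
    rw [hr] at this
    linarith
  have hcomp : ∀ i, θs i = (-2*r₁/lam) * (f₁ i - f₂ i) := by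
    intro i
    have := hv (Pi.single i 1)
    rw [single_dotProduct, dotProduct_single] at this
    simp only [one_mul, mul_one, Pi.sub_apply] at this
    field_simp
    linarith
  set c := -2*r₁/lam with hc
  have hθ : θs = c • (f₁ - f₂) := by
    funext i
    simp only [Pi.smul_apply, Pi.sub_apply, smul_eq_mul]
    exact hcomp i
  set S := (f₁ - f₂) ⬝ᵥ (f₁ - f₂) with hS
  have hSnn : 0 ≤ S := by
    rw [hS, dotProduct]
    apply Finset.sum_nonneg
    intro i _
    exact mul_self_nonneg _
  have hdot : θs ⬝ᵥ (f₁ - f₂) = c * S := by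
    rw [hθ, smul_dotProduct, smul_eq_mul]
  have hsub : θs ⬝ᵥ f₁ - θs ⬝ᵥ f₂ = c * S := by
    rw [← dotProduct_sub]; exact hdot
  have hlc : lam * c = -2 * r₁ := by
    rw [hc]; field_simp
  clear_value c
  have h2r : 2 * r₁ = c * S - (t₁ - t₂) := by
    have h3 : r₁ - r₂ = c * S - (t₁ - t₂) := by
      rw [hr₁, hr₂]; linarith [hsub]
    linarith
  have hceq : c = (t₁ - t₂) / (lam + S) := by
    have hne : lam + S ≠ 0 := by positivity
    rw [eq_div_iff hne]
    linear_combination hlc - h2r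
  constructor
  · rw [hθ, hceq]
  constructor
  · exact ⟨c, hθ⟩
  · intro ht hf
    rw [hθ]
    have hcne : c ≠ 0 := by
      rw [hceq]
      apply div_ne_zero (sub_ne_zero.mpr ht) (by positivity)
    exact smul_ne_zero hcne (sub_ne_zero.mpr hf)
end

section
/- Let λ > 0 and t₁, t₂ ∈ ℝ with t₁ ≠ t₂. Let I and J be nonempty finite index sets and f : I → ℝ^d, g : J → ℝ^d. Suppose there exist θ̄ ∈ ℝ^d and θ⁰ ∈ ℝ such that for every pair (i, j) ∈ I × J: θ̄ = ((t₁ − t₂) / (λ + ‖f_i − g_j‖²)) · (f_i − g_j) and θ⁰ = (1/2)((t₁ + t₂) − ⟨θ̄, f_i + g_j⟩). Then all f_i (i ∈ I) are equal and all g_j (j ∈ J) are equal. -/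
open Matrix

/-- Final step in the proof of Proposition 1: if the minimum-norm two-point ridge
solutions `(θ̄, θ⁰)` coincide for all batches pairing a class-1 feature `f_i` with a
class-2 feature `g_j`, then all class-1 features are equal and all class-2 features
are equal. -/
theorem stmt9 (d : ℕ) (lam : ℝ) (hlam : 0 < lam) (t₁ t₂ : ℝ) (ht : t₁ ≠ t₂)
    (I J : Type*) [Fintype I] [Fintype J] [Nonempty I] [Nonempty J]
    (f : I → (Fin d → ℝ)) (g : J → (Fin d → ℝ))
    (θbar : Fin d → ℝ) (θ0 : ℝ)
    (h1 : ∀ i j, θbar =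
      ((t₁ - t₂) / (lam + (f i - g j) ⬝ᵥ (f i - g j))) • (f i - g j))
    (h2 : ∀ i j, θ0 = (1 / 2) * ((t₁ + t₂) - θbar ⬝ᵥ (f i + g j))) :
    (∀ i i', f i = f i') ∧ (∀ j j', g j = g j') := by
  have hsub : t₁ - t₂ ≠ 0 := sub_ne_zero_of_ne ht
  have hDpos : ∀ (i : I) (j : J), 0 < lam + (f i - g j) ⬝ᵥ (f i - g j) := by
    intro i j
    have : 0 ≤ (f i - g j) ⬝ᵥ (f i - g j) :=
      Finset.sum_nonneg fun x _ => mul_self_nonneg _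
    linarith
  by_cases hθ : θbar = 0
  · -- scalar is nonzero, so f i = g j for all i, j
    have hfg : ∀ (i : I) (j : J), f i = g j := by
      intro i j
      have hc : (t₁ - t₂) / (lam + (f i - g j) ⬝ᵥ (f i - g j)) ≠ 0 :=
        div_ne_zero hsub (hDpos i j).ne'
      have h := (h1 i j).symm
      rw [hθ] at h
      rcases smul_eq_zero.mp h with h | h
      · exact absurd h hc
      · exact sub_eq_zero.mp h
    obtain ⟨j0⟩ := ‹Nonempty J›
    obtain ⟨i0⟩ := ‹Nonempty I›
    constructor
    · intro i i'; rw [hfg i j0, hfg i' j0]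
    · intro j j'; rw [← hfg i0 j, ← hfg i0 j']
  · -- θbar ≠ 0 : each f i - g j is a definite multiple of θbar
    have hv : ∀ (i : I) (j : J),
        f i - g j = ((lam + (f i - g j) ⬝ᵥ (f i - g j)) / (t₁ - t₂)) • θbar := by
      intro i j
      rw [h1 i j, smul_smul]
      have hD : lam + (f i - g j) ⬝ᵥ (f i - g j) ≠ 0 := (hDpos i j).ne'
      rw [div_mul_div_comm, mul_comm, div_self (mul_ne_zero hsub hD), one_smul]
    have hN : 0 < θbar ⬝ᵥ θbar := by
      have h0 : 0 ≤ θbar ⬝ᵥ θbar :=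
        Finset.sum_nonneg fun x _ => mul_self_nonneg _
      rcases h0.lt_or_eq with h | h
      · exact h
      · exact absurd (dotProduct_self_eq_zero.mp h.symm) hθ
    have hdot : ∀ (i i' : I) (j j' : J),
        θbar ⬝ᵥ (f i + g j) = θbar ⬝ᵥ (f i' + g j') := by
      intro i i' j j'
      have ha := h2 i j
      have hb := h2 i' j'
      rw [ha] at hb
      linarith
    have hfdot : ∀ (i i' : I), θbar ⬝ᵥ f i = θbar ⬝ᵥ f i' := by
      intro i i'
      obtain ⟨j⟩ := ‹Nonempty J›
      have h := hdot i i' j j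
      simp only [dotProduct_add] at h
      linarith
    have hgdot : ∀ (j j' : J), θbar ⬝ᵥ g j = θbar ⬝ᵥ g j' := by
      intro j j'
      obtain ⟨i⟩ := ‹Nonempty I›
      have h := hdot i i j j'
      simp only [dotProduct_add] at h
      linarith
    have hdotsub : ∀ (i : I) (j : J), θbar ⬝ᵥ (f i - g j) =
        ((lam + (f i - g j) ⬝ᵥ (f i - g j)) / (t₁ - t₂)) * (θbar ⬝ᵥ θbar) := by
      intro i j
      conv_lhs => rw [hv i j]
      rw [dotProduct_smul, smul_eq_mul]
    have hsamediff : ∀ (i i' : I) (j j' : J), f i - g j = f i' - g j' := by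
      intro i i' j j'
      have e1 := hdotsub i j
      have e2 := hdotsub i' j'
      have hds : θbar ⬝ᵥ (f i - g j) = θbar ⬝ᵥ (f i' - g j') := by
        simp only [dotProduct_sub]
        rw [hfdot i i', hgdot j j']
      rw [e1, e2] at hds
      have hcoef : (lam + (f i - g j) ⬝ᵥ (f i - g j)) / (t₁ - t₂) =
          (lam + (f i' - g j') ⬝ᵥ (f i' - g j')) / (t₁ - t₂) :=
        mul_right_cancel₀ hN.ne' hds
      rw [hv i j, hv i' j', hcoef]
    obtain ⟨j0⟩ := ‹Nonempty J›
    obtain ⟨i0⟩ := ‹Nonempty I›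
    constructor
    · intro i i'
      have := hsamediff i i' j0 j0
      exact sub_left_inj.mp this
    · intro j j'
      have := hsamediff i0 i0 j j'
      have h' : g j = g j' := by
        have := sub_right_inj.mp this
        simpa using this
      exact h'
end

section
/- Let λ > 0 and t₁, t₂ ∈ ℝ with t₁ ≠ t₂. Let a : ℝ → ℝ be differentiable with a(z) > 0 and a'(z) ≠ 0 for all z, let X₁ and X₂ be nonempty finite sets of inputs (the two classes) in ℝ^{d_I} with X₁ ∩ X₂ = ∅, and let g : ℝ^{d_I} → ℝ^m be a function with g(x)_j > 0 for every x ∈ X₁ ∪ X₂ and every j. For W ∈ ℝ^{d_F × m} define the feature map F_W(x)_i = a(Σ_j W_{ij} g(x)_j). Fix W* and for each batch b = (x, x′) ∈ X₁ × X₂ let (θ̄_b, θ⁰_b) be the unique global minimizer of the two-point ridge objective for the samples (F_{W*}(x), t₁) and (F_{W*}(x′), t₂). Assume: (i) for every x ∈ X₁, the map W ↦ E_b (⟨θ̄_b, F_W(x)⟩ + θ⁰_b − t₁)² (with the classifiers (θ̄_b, θ⁰_b) held fixed at their values at W*) has vanishing Fréchet derivative at W = W*, and likewise for every x′ ∈ X₂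 with target t₂, where E_b denotes the average over all b ∈ X₁ × X₂; (ii) class separability: F_{W*}(x) ≠ F_{W*}(x′) for all x ∈ X₁, x′ ∈ X₂. Then F_{W*}(x) = F_{W*}(x″) for all x, x″ in the same class, and F_{W*}(x) ≠ F_{W*}(x′) for x, x′ in different classes. -/
open Matrix

lemma quadzero (A B : ℝ) (hA : 0 ≤ A) (h : ∀ s : ℝ, 0 ≤ A * s ^ 2 + B * s) : B = 0 := by
  have hA1 : (0:ℝ) < A + 1 := by linarith
  have h1 := mul_le_mul_of_nonneg_left (h (-B / (2 * (A + 1)))) (le_of_lt (by positivity : (0:ℝ) < (2*(A+1))^2))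
  have he : (2*(A+1))^2 * (A * (-B / (2 * (A + 1))) ^ 2 + B * (-B / (2 * (A + 1)))) =
      A * B^2 - B^2 * (2*(A+1)) := by
    field_simp; ring
  rw [mul_zero, he] at h1
  nlinarith [sq_nonneg B]

lemma ridge_struct {dF : ℕ} (lam t₁ t₂ : ℝ) (hlam : 0 < lam) (ht : t₁ ≠ t₂)
    (f₁ f₂ θ : Fin dF → ℝ) (θz : ℝ)
    (hmin : ∀ q : (Fin dF → ℝ) × ℝ,
      (θ ⬝ᵥ f₁ + θz - t₁) ^ 2 + (θ ⬝ᵥ f₂ + θz - t₂) ^ 2 + (lam / 2) * (θ ⬝ᵥ θ) ≤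
      (q.1 ⬝ᵥ f₁ + q.2 - t₁) ^ 2 + (q.1 ⬝ᵥ f₂ + q.2 - t₂) ^ 2 + (lam / 2) * (q.1 ⬝ᵥ q.1)) :
    ∃ κ : ℝ, κ ≠ 0 ∧ ∀ i, θ i = κ * (f₁ i - f₂ i) := by
  have hsum : 2 * ((θ ⬝ᵥ f₁ + θz - t₁) + (θ ⬝ᵥ f₂ + θz - t₂)) = 0 := by
    apply quadzero 2 _ (by norm_num)
    intro s
    have h := hmin (θ, θz + s)
    simp only at h
    have key : (θ ⬝ᵥ f₁ + (θz + s) - t₁) ^ 2 + (θ ⬝ᵥ f₂ + (θz + s) - t₂) ^ 2 + (lam/2) * (θ ⬝ᵥ θ)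
        - ((θ ⬝ᵥ f₁ + θz - t₁) ^ 2 + (θ ⬝ᵥ f₂ + θz - t₂) ^ 2 + (lam/2) * (θ ⬝ᵥ θ))
        = 2 * s ^ 2 + (2 * ((θ ⬝ᵥ f₁ + θz - t₁) + (θ ⬝ᵥ f₂ + θz - t₂))) * s := by ring
    linarith
  have hsta : ∀ i, 2 * (θ ⬝ᵥ f₁ + θz - t₁) * f₁ i + 2 * (θ ⬝ᵥ f₂ + θz - t₂) * f₂ i + lam * θ i = 0 := by
    intro i
    apply quadzero (f₁ i ^ 2 + f₂ i ^ 2 + lam / 2) _ (by positivity)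
    intro s
    have h := hmin (θ + s • (Pi.single i (1:ℝ) : Fin dF → ℝ), θz)
    simp only at h
    have e1 : (θ + s • (Pi.single i (1:ℝ) : Fin dF → ℝ)) ⬝ᵥ f₁ = θ ⬝ᵥ f₁ + s * f₁ i := by
      rw [add_dotProduct, smul_dotProduct, single_dotProduct, smul_eq_mul, one_mul]
    have e2 : (θ + s • (Pi.single i (1:ℝ) : Fin dF → ℝ)) ⬝ᵥ f₂ = θ ⬝ᵥ f₂ + s * f₂ i := by
      rw [add_dotProduct, smul_dotProduct, single_dotProduct, smul_eq_mul, one_mul]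
    have e3 : (θ + s • (Pi.single i (1:ℝ) : Fin dF → ℝ)) ⬝ᵥ (θ + s • (Pi.single i (1:ℝ) : Fin dF → ℝ))
        = θ ⬝ᵥ θ + 2 * s * θ i + s ^ 2 := by
      simp only [add_dotProduct, dotProduct_add, smul_dotProduct, dotProduct_smul,
        single_dotProduct, dotProduct_single, smul_eq_mul,
        Pi.add_apply, Pi.smul_apply, Pi.single_eq_same]
      ring
    rw [e1, e2, e3] at h
    nlinarith [h]
  set r₁ := θ ⬝ᵥ f₁ + θz - t₁ with hr₁
  set r₂ := θ ⬝ᵥ f₂ + θz - t₂ with hr₂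
  have hr2 : r₂ = -r₁ := by linarith
  have hr1ne : r₁ ≠ 0 := by
    intro h0
    have hθ : ∀ i, θ i = 0 := by
      intro i
      have h := hsta i
      rw [h0, hr2, h0] at h
      have h' : lam * θ i = 0 := by linarith
      exact (mul_eq_zero.1 h').resolve_left (ne_of_gt hlam)
    have hθf : ∀ f : Fin dF → ℝ, θ ⬝ᵥ f = 0 := by
      intro f; simp [dotProduct, hθ]
    apply ht
    have h1 : θz - t₁ = 0 := by rw [hr₁, hθf] at h0; linarith
    have h2 : θz - t₂ = 0 := by
      have h := hr2; rw [h0, hr₂, hθf] at h; linarith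
    linarith
  refine ⟨-2 * r₁ / lam, ?_, ?_⟩
  · simp only [ne_eq, div_eq_zero_iff]
    push_neg
    exact ⟨fun h => hr1ne (by linarith), ne_of_gt hlam⟩
  intro i
  have h := hsta i
  rw [hr2] at h
  field_simp
  linarith [h]


lemma stat_extract {m dF : ℕ} {ι : Type*} (B : Finset ι)
    (c : ℝ) (hc : c ≠ 0) (t : ℝ)
    (a : ℝ → ℝ) (ha : Differentiable ℝ a) (ha' : ∀ z, deriv a z ≠ 0)
    (gx : Fin m → ℝ) (j₀ : Fin m) (hgx : gx j₀ ≠ 0)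
    (θb : ι → Fin dF → ℝ) (θ0b : ι → ℝ)
    (Wstar : Fin dF → Fin m → ℝ)
    (hstat : fderiv ℝ (fun W : Fin dF → Fin m → ℝ =>
        c * ∑ b ∈ B, ((∑ i, θb b i * a (∑ j, W i j * gx j)) + θ0b b - t) ^ 2) Wstar = 0) :
    ∀ i, ∑ b ∈ B, ((∑ i', θb b i' * a (∑ j, Wstar i' j * gx j)) + θ0b b - t) * θb b i = 0 := by
  intro i
  set z : Fin dF → ℝ := fun i' => ∑ j, Wstar i' j * gx j with hz
  set L : Fin dF → (Fin dF → Fin m → ℝ) →L[ℝ] ℝ := fun i' =>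
    ∑ j, gx j • ((ContinuousLinearMap.proj j).comp
      (ContinuousLinearMap.proj (R := ℝ) (φ := fun _ : Fin dF => Fin m → ℝ) i')) with hLdef
  have hL : ∀ i', HasFDerivAt (fun W : Fin dF → Fin m → ℝ => ∑ j, W i' j * gx j) (L i') Wstar := by
    intro i'
    apply HasFDerivAt.fun_sum
    intro j _
    exact (((ContinuousLinearMap.proj j).comp
      (ContinuousLinearMap.proj (R := ℝ) (φ := fun _ : Fin dF => Fin m → ℝ) i')).hasFDerivAt).mul_const (gx j)
  have hA : ∀ i', HasFDerivAt (fun W : Fin dF → Fin m → ℝ => a (∑ j, W i' j * gx j))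
      (deriv a (z i') • L i') Wstar :=
    fun i' => HasDerivAt.comp_hasFDerivAt Wstar ((ha (z i')).hasDerivAt) (hL i')
  set ρ : ι → ℝ := fun b => (∑ i', θb b i' * a (z i')) + θ0b b - t with hρ
  set D1 : ι → ((Fin dF → Fin m → ℝ) →L[ℝ] ℝ) := fun b =>
    ∑ i', θb b i' • (deriv a (z i') • L i') with hD1
  have hb : ∀ b, HasFDerivAt (fun W : Fin dF → Fin m → ℝ =>
      (∑ i', θb b i' * a (∑ j, W i' j * gx j)) + θ0b b - t) (D1 b) Wstar := by
    intro b
    exact ((HasFDerivAt.fun_sum fun i' _ => (hA i').const_mul (θb b i')).add_const (θ0b b)).sub_const t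
  have hsq : ∀ b, HasFDerivAt (fun W : Fin dF → Fin m → ℝ =>
      ((∑ i', θb b i' * a (∑ j, W i' j * gx j)) + θ0b b - t) ^ 2)
      (((2:ℕ) * ρ b ^ 1) • D1 b) Wstar :=
    fun b => by have := (hasDerivAt_pow 2 (ρ b)).comp_hasFDerivAt Wstar (hb b); exact this
  have htot : HasFDerivAt (fun W : Fin dF → Fin m → ℝ =>
      c * ∑ b ∈ B, ((∑ i', θb b i' * a (∑ j, W i' j * gx j)) + θ0b b - t) ^ 2)
      (c • ∑ b ∈ B, ((2:ℕ) * ρ b ^ 1) • D1 b) Wstar :=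
    (HasFDerivAt.fun_sum fun b _ => hsq b).const_mul c
  have hD0 : (c • ∑ b ∈ B, ((2:ℕ) * ρ b ^ 1) • D1 b)
      = (0 : (Fin dF → Fin m → ℝ) →L[ℝ] ℝ) := htot.fderiv.symm.trans hstat
  set M : Fin dF → Fin m → ℝ := Pi.single i (Pi.single j₀ (1:ℝ)) with hM
  have hval := congrArg (fun T : (Fin dF → Fin m → ℝ) →L[ℝ] ℝ => T M) hD0
  simp only [ContinuousLinearMap.smul_apply, ContinuousLinearMap.coe_sum',
    Finset.sum_apply, ContinuousLinearMap.comp_apply, ContinuousLinearMap.proj_apply,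
    ContinuousLinearMap.zero_apply, smul_eq_mul, hD1, hLdef, hM,
    Pi.single_apply, ite_apply, Pi.zero_apply, mul_ite, mul_zero, mul_one,
    Finset.sum_ite_eq', Finset.mem_univ, if_true] at hval
  have hinner : ∀ x₁ : Fin dF,
      (∑ x : Fin m, if x₁ = i then if x = j₀ then gx x else 0 else 0)
        = if x₁ = i then gx j₀ else 0 := by
    intro x₁; by_cases h : x₁ = i <;> simp [h, Finset.sum_ite_eq']
  simp only [hinner, mul_ite, mul_zero, Finset.sum_ite_eq', Finset.mem_univ, if_true,
    Nat.cast_ofNat, pow_one] at hval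
  have hfac : ∑ b ∈ B, 2 * ρ b * (θb b i * (deriv a (z i) * gx j₀))
      = (2 * (deriv a (z i) * gx j₀)) * ∑ b ∈ B, ρ b * θb b i := by
    rw [Finset.mul_sum]; exact Finset.sum_congr rfl (fun b _ => by ring)
  rw [hfac] at hval
  have h2 : (2 * (deriv a (z i) * gx j₀)) ≠ 0 :=
    mul_ne_zero two_ne_zero (mul_ne_zero (ha' (z i)) hgx)
  have hS : ∑ b ∈ B, ρ b * θb b i = 0 := by
    rcases mul_eq_zero.mp hval with h | h
    · exact absurd h hc
    · rcases mul_eq_zero.mp h with h' | h'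
      · exact absurd h' h2
      · exact h'
  exact hS


lemma perp_of_sum {dF : ℕ} {ι : Type*} (P : Finset ι) (Θ : ι → Fin dF → ℝ) (v : Fin dF → ℝ)
    (h0 : ∀ i, ∑ b ∈ P, (Θ b ⬝ᵥ v) * Θ b i = 0) : ∀ b ∈ P, Θ b ⬝ᵥ v = 0 := by
  have hsq : ∑ b ∈ P, (Θ b ⬝ᵥ v) ^ 2 = 0 := by
    calc ∑ b ∈ P, (Θ b ⬝ᵥ v) ^ 2
        = ∑ b ∈ P, ∑ i, v i * ((Θ b ⬝ᵥ v) * Θ b i) := by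
          refine Finset.sum_congr rfl fun b _ => ?_
          rw [sq]
          nth_rewrite 2 [dotProduct]
          rw [Finset.mul_sum]
          exact Finset.sum_congr rfl fun i _ => by ring
      _ = ∑ i, ∑ b ∈ P, v i * ((Θ b ⬝ᵥ v) * Θ b i) := Finset.sum_comm
      _ = ∑ i : Fin dF, v i * ∑ b ∈ P, (Θ b ⬝ᵥ v) * Θ b i := by
          exact Finset.sum_congr rfl fun i _ => (Finset.mul_sum _ _ _).symm
      _ = 0 := by simp [h0]
  intro b hb
  have := (Finset.sum_eq_zero_iff_of_nonneg (fun b _ => sq_nonneg (Θ b ⬝ᵥ v))).1 hsq b hb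
  exact pow_eq_zero_iff (two_ne_zero) |>.1 this


/-- Proposition 1 of the paper, with the feature extractor realized by its last
fully-connected layer `F_W(x)_i = a(∑_j W_{ij} g(x)_j)` under conditions (C1)–(C5):
if the weak classifiers `(θ̄_b, θ⁰_b)` minimize the two-point ridge objective for
every batch pairing one sample from each class, and the classifier-anonymized
sample-wise squared losses are all stationary at `W*` in a class-separable fashion,
then all features of the same class coincide while features of different classes
differ. -/
theorem stmt11 (dI m dF : ℕ) (lam : ℝ) (hlam : 0 < lam)
    (t₁ t₂ : ℝ) (ht : t₁ ≠ t₂)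
    (a : ℝ → ℝ) (ha : Differentiable ℝ a)
    (hapos : ∀ z : ℝ, 0 < a z) (ha' : ∀ z : ℝ, deriv a z ≠ 0)
    (X₁ X₂ : Finset (Fin dI → ℝ)) (hX₁ : X₁.Nonempty) (hX₂ : X₂.Nonempty)
    (hdisj : Disjoint X₁ X₂)
    (g : (Fin dI → ℝ) → (Fin m → ℝ))
    (hg : ∀ x ∈ X₁ ∪ X₂, ∀ j, 0 < g x j)
    (F : (Fin dF → Fin m → ℝ) → (Fin dI → ℝ) → (Fin dF → ℝ))
    (hF : ∀ W x i, F W x i = a (∑ j, W i j * g x j))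
    (Wstar : Fin dF → Fin m → ℝ)
    (θbar : (Fin dI → ℝ) → (Fin dI → ℝ) → (Fin dF → ℝ))
    (θ0 : (Fin dI → ℝ) → (Fin dI → ℝ) → ℝ)
    (hmin : ∀ x₁ ∈ X₁, ∀ x₂ ∈ X₂, ∀ q : (Fin dF → ℝ) × ℝ,
      (θbar x₁ x₂ ⬝ᵥ F Wstar x₁ + θ0 x₁ x₂ - t₁) ^ 2
          + (θbar x₁ x₂ ⬝ᵥ F Wstar x₂ + θ0 x₁ x₂ - t₂) ^ 2
          + (lam / 2) * (θbar x₁ x₂ ⬝ᵥ θbar x₁ x₂) ≤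
        (q.1 ⬝ᵥ F Wstar x₁ + q.2 - t₁) ^ 2
          + (q.1 ⬝ᵥ F Wstar x₂ + q.2 - t₂) ^ 2
          + (lam / 2) * (q.1 ⬝ᵥ q.1))
    (hstat1 : ∀ x ∈ X₁,
      fderiv ℝ (fun W : Fin dF → Fin m → ℝ =>
        ((X₁.card : ℝ) * (X₂.card : ℝ))⁻¹ *
          ∑ x₁ ∈ X₁, ∑ x₂ ∈ X₂,
            (θbar x₁ x₂ ⬝ᵥ F W x + θ0 x₁ x₂ - t₁) ^ 2) Wstar = 0)
    (hstat2 : ∀ x' ∈ X₂,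
      fderiv ℝ (fun W : Fin dF → Fin m → ℝ =>
        ((X₁.card : ℝ) * (X₂.card : ℝ))⁻¹ *
          ∑ x₁ ∈ X₁, ∑ x₂ ∈ X₂,
            (θbar x₁ x₂ ⬝ᵥ F W x' + θ0 x₁ x₂ - t₂) ^ 2) Wstar = 0)
    (hsep : ∀ x ∈ X₁, ∀ x' ∈ X₂, F Wstar x ≠ F Wstar x') :
    (∀ x ∈ X₁, ∀ x'' ∈ X₁, F Wstar x = F Wstar x'') ∧
    (∀ x' ∈ X₂, ∀ x'' ∈ X₂, F Wstar x' = F Wstar x'') ∧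
    (∀ x ∈ X₁, ∀ x' ∈ X₂, F Wstar x ≠ F Wstar x') := by
  obtain ⟨x₁0, hx₁0⟩ := hX₁
  obtain ⟨x₂0, hx₂0⟩ := hX₂
  rcases Nat.eq_zero_or_pos m with hm | hm
  · exfalso
    apply hsep x₁0 hx₁0 x₂0 hx₂0
    funext i
    rw [hF, hF]
    subst hm
    simp
  set j₀ : Fin m := ⟨0, hm⟩ with hj₀
  have hc : ((X₁.card : ℝ) * (X₂.card : ℝ))⁻¹ ≠ 0 := by
    have hc1 : (0:ℝ) < X₁.card := by exact_mod_cast Finset.card_pos.2 ⟨x₁0, hx₁0⟩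
    have hc2 : (0:ℝ) < X₂.card := by exact_mod_cast Finset.card_pos.2 ⟨x₂0, hx₂0⟩
    positivity
  have key : ∀ (x : Fin dI → ℝ) (t : ℝ), x ∈ X₁ ∪ X₂ →
      fderiv ℝ (fun W : Fin dF → Fin m → ℝ =>
        ((X₁.card : ℝ) * (X₂.card : ℝ))⁻¹ *
          ∑ x₁ ∈ X₁, ∑ x₂ ∈ X₂, (θbar x₁ x₂ ⬝ᵥ F W x + θ0 x₁ x₂ - t) ^ 2) Wstar = 0 →
      ∀ i, ∑ b ∈ X₁ ×ˢ X₂, (θbar b.1 b.2 ⬝ᵥ F Wstar x + θ0 b.1 b.2 - t) * θbar b.1 b.2 i = 0 := by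
    intro x t hx hst i
    have he : (fun W : Fin dF → Fin m → ℝ =>
        ((X₁.card : ℝ) * (X₂.card : ℝ))⁻¹ *
          ∑ b ∈ X₁ ×ˢ X₂, ((∑ i', θbar b.1 b.2 i' * a (∑ j, W i' j * g x j)) + θ0 b.1 b.2 - t) ^ 2)
        = (fun W => ((X₁.card : ℝ) * (X₂.card : ℝ))⁻¹ *
          ∑ x₁ ∈ X₁, ∑ x₂ ∈ X₂, (θbar x₁ x₂ ⬝ᵥ F W x + θ0 x₁ x₂ - t) ^ 2) := by
      funext W
      rw [Finset.sum_product]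
      simp only [dotProduct, hF]
    have h := stat_extract (X₁ ×ˢ X₂) _ hc t a ha ha' (g x) j₀
      (ne_of_gt (hg x hx j₀)) (fun b => θbar b.1 b.2) (fun b => θ0 b.1 b.2) Wstar
      (by rw [he]; exact hst) i
    simpa only [dotProduct, hF] using h
  have hκ : ∀ x₁ ∈ X₁, ∀ x₂ ∈ X₂, ∃ κ : ℝ, κ ≠ 0 ∧
      ∀ i, θbar x₁ x₂ i = κ * (F Wstar x₁ i - F Wstar x₂ i) :=
    fun x₁ h₁ x₂ h₂ => ridge_struct lam t₁ t₂ hlam ht _ _ _ _ (hmin x₁ h₁ x₂ h₂)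
  have main : ∀ (x x'' : Fin dI → ℝ) (t : ℝ),
      (∀ i, ∑ b ∈ X₁ ×ˢ X₂, (θbar b.1 b.2 ⬝ᵥ F Wstar x + θ0 b.1 b.2 - t) * θbar b.1 b.2 i = 0) →
      (∀ i, ∑ b ∈ X₁ ×ˢ X₂, (θbar b.1 b.2 ⬝ᵥ F Wstar x'' + θ0 b.1 b.2 - t) * θbar b.1 b.2 i = 0) →
      ∀ b ∈ X₁ ×ˢ X₂, θbar b.1 b.2 ⬝ᵥ (F Wstar x - F Wstar x'') = 0 := by
    intro x x'' t k1 k2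
    apply perp_of_sum
    intro i
    have h1 := k1 i; have h2 := k2 i
    calc ∑ b ∈ X₁ ×ˢ X₂, (θbar b.1 b.2 ⬝ᵥ (F Wstar x - F Wstar x'')) * θbar b.1 b.2 i
        = ∑ b ∈ X₁ ×ˢ X₂, ((θbar b.1 b.2 ⬝ᵥ F Wstar x + θ0 b.1 b.2 - t) * θbar b.1 b.2 i
            - (θbar b.1 b.2 ⬝ᵥ F Wstar x'' + θ0 b.1 b.2 - t) * θbar b.1 b.2 i) := by
          refine Finset.sum_congr rfl fun b _ => ?_
          rw [dotProduct_sub]; ring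
      _ = 0 := by rw [Finset.sum_sub_distrib, h1, h2, sub_zero]
  refine ⟨?_, ?_, hsep⟩
  · intro x hx x'' hx''
    have k1 := key x t₁ (Finset.mem_union_left _ hx) (hstat1 x hx)
    have k2 := key x'' t₁ (Finset.mem_union_left _ hx'') (hstat1 x'' hx'')
    have hperp := main x x'' t₁ k1 k2
    set v := F Wstar x - F Wstar x'' with hv
    have e1 : (F Wstar x - F Wstar x₂0) ⬝ᵥ v = 0 := by
      obtain ⟨κ, hκ0, hκi⟩ := hκ x hx x₂0 hx₂0
      have h := hperp (x, x₂0) (Finset.mem_product.2 ⟨hx, hx₂0⟩)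
      have he : θbar x x₂0 ⬝ᵥ v = κ * ((F Wstar x - F Wstar x₂0) ⬝ᵥ v) := by
        simp only [dotProduct, Finset.mul_sum, Pi.sub_apply]
        exact Finset.sum_congr rfl fun i _ => by rw [hκi i]; ring
      rw [he] at h
      exact (mul_eq_zero.1 h).resolve_left hκ0
    have e2 : (F Wstar x'' - F Wstar x₂0) ⬝ᵥ v = 0 := by
      obtain ⟨κ, hκ0, hκi⟩ := hκ x'' hx'' x₂0 hx₂0
      have h := hperp (x'', x₂0) (Finset.mem_product.2 ⟨hx'', hx₂0⟩)
      have he : θbar x'' x₂0 ⬝ᵥ v = κ * ((F Wstar x'' - F Wstar x₂0) ⬝ᵥ v) := by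
        simp only [dotProduct, Finset.mul_sum, Pi.sub_apply]
        exact Finset.sum_congr rfl fun i _ => by rw [hκi i]; ring
      rw [he] at h
      exact (mul_eq_zero.1 h).resolve_left hκ0
    have hvv : v ⬝ᵥ v = 0 := by
      have he : v ⬝ᵥ v = (F Wstar x - F Wstar x₂0) ⬝ᵥ v - (F Wstar x'' - F Wstar x₂0) ⬝ᵥ v := by
        rw [hv, sub_dotProduct, sub_dotProduct, sub_dotProduct]; ring
      rw [he, e1, e2, sub_zero]
    exact sub_eq_zero.1 (hv ▸ dotProduct_self_eq_zero.1 hvv)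
  · intro x' hx' x'' hx''
    have k1 := key x' t₂ (Finset.mem_union_right _ hx') (hstat2 x' hx')
    have k2 := key x'' t₂ (Finset.mem_union_right _ hx'') (hstat2 x'' hx'')
    have hperp := main x' x'' t₂ k1 k2
    set v := F Wstar x' - F Wstar x'' with hv
    have e1 : (F Wstar x₁0 - F Wstar x') ⬝ᵥ v = 0 := by
      obtain ⟨κ, hκ0, hκi⟩ := hκ x₁0 hx₁0 x' hx'
      have h := hperp (x₁0, x') (Finset.mem_product.2 ⟨hx₁0, hx'⟩)
      have he : θbar x₁0 x' ⬝ᵥ v = κ * ((F Wstar x₁0 - F Wstar x') ⬝ᵥ v) := by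
        simp only [dotProduct, Finset.mul_sum, Pi.sub_apply]
        exact Finset.sum_congr rfl fun i _ => by rw [hκi i]; ring
      rw [he] at h
      exact (mul_eq_zero.1 h).resolve_left hκ0
    have e2 : (F Wstar x₁0 - F Wstar x'') ⬝ᵥ v = 0 := by
      obtain ⟨κ, hκ0, hκi⟩ := hκ x₁0 hx₁0 x'' hx''
      have h := hperp (x₁0, x'') (Finset.mem_product.2 ⟨hx₁0, hx''⟩)
      have he : θbar x₁0 x'' ⬝ᵥ v = κ * ((F Wstar x₁0 - F Wstar x'') ⬝ᵥ v) := by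
        simp only [dotProduct, Finset.mul_sum, Pi.sub_apply]
        exact Finset.sum_congr rfl fun i _ => by rw [hκi i]; ring
      rw [he] at h
      exact (mul_eq_zero.1 h).resolve_left hκ0
    have hvv : v ⬝ᵥ v = 0 := by
      have he : v ⬝ᵥ v = (F Wstar x₁0 - F Wstar x'') ⬝ᵥ v - (F Wstar x₁0 - F Wstar x') ⬝ᵥ v := by
        rw [hv, sub_dotProduct, sub_dotProduct, sub_dotProduct]; ring
      rw [he, e1, e2, sub_zero]
    exact sub_eq_zero.1 (hv ▸ dotProduct_self_eq_zero.1 hvv)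
end
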